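/- For any i, j ∈ {2,3,4}, the function g(λ₁,λ₂) = θ_i(λ₊|τ)·θ_j(λ₋|τ) satisfies (M̃₁ g)(λ₁,λ₂) = [θ₁(2h)²·θ_i(0)·θ_j(0) / (θ₁(h)²·θ_i(h)·θ_j(h))] · g(λ₁,λ₂) and (M̃₂ g)(λ₁,λ₂) = [θ₁(2h)²/θ₁(h)²]·(θ_i(0)²/θ_i(h)² + θ_j(0)²/θ_j(h)²) · g(λ₁,λ₂), for all h with θ₁(h)θ_i(h)θ_j(h) ≠ 0 and all (λ₁,λ₂) at which every theta-function denominator occurring in M̃₁ and M̃₂ is nonzero (here all theta values without explicit argument bar are taken at modulus τ). -/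

import Mathlib

/-
All four theta functions satisfy addition formulas expressing `θₖ(u) θₖ(v)` through
`θ₂(·|2τ)` and `θ₃(·|2τ)` at `u + v` and `u - v`; they come from splitting the double series for
`θ₃(u) θ₃(v)` by the parity of the summation indices. The formula is antisymmetric for `θ₁` and
symmetric for `θ₂, θ₃, θ₄`, and combining them gives the three-term identity
`(θ₁(x-h) θₖ(x+h) + θ₁(x+h) θₖ(x-h)) θ₁(h) θₖ(h) = θ₁(2h) θₖ(0) θ₁(x) θₖ(x)` for `k = 2, 3, 4`,
so `θₖ` is an eigenfunction of `H f(x) = (θ₁(x-h) f(x+h) + θ₁(x+h) f(x-h)) / θ₁(x)`.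
On functions of `(λ₊, λ₋)` one has `M̃₁ = H₊ H₋` and `M̃₂ = H₊² + H₋²`, whence the eigenvalues.
-/

open Complex

/-- The Jacobi theta function θ₁(z|τ). -/
noncomputable def th1 (τ z : ℂ) : ℂ :=
  ∑' k : ℤ, exp (2 * (Real.pi : ℂ) * I *
    ((z + 1/2) * ((k : ℂ) + 1/2) + ((k : ℂ) + 1/2)^2 * τ / 2))

/-- The Jacobi theta function θ₂(z|τ). -/
noncomputable def th2 (τ z : ℂ) : ℂ :=
  ∑' k : ℤ, exp (2 * (Real.pi : ℂ) * I *
    (z * ((k : ℂ) + 1/2) + ((k : ℂ) + 1/2)^2 * τ / 2))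

/-- The Jacobi theta function θ₃(z|τ). -/
noncomputable def th3 (τ z : ℂ) : ℂ :=
  ∑' k : ℤ, exp (2 * (Real.pi : ℂ) * I * (z * (k : ℂ) + (k : ℂ)^2 * τ / 2))

/-- The Jacobi theta function θ₄(z|τ). -/
noncomputable def th4 (τ z : ℂ) : ℂ :=
  ∑' k : ℤ, exp (2 * (Real.pi : ℂ) * I * ((z + 1/2) * (k : ℂ) + (k : ℂ)^2 * τ / 2))

/-- The difference operator `M̃₁` of type `C₂`. -/
noncomputable def M1t (τ h : ℂ) (f : ℂ × ℂ → ℂ) (l : ℂ × ℂ) : ℂ :=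
  th1 τ (l.1 + l.2 - h) * th1 τ (l.1 - l.2 - h)
      / (th1 τ (l.1 + l.2) * th1 τ (l.1 - l.2)) * f (l.1 + h, l.2)
  + th1 τ (l.1 + l.2 + h) * th1 τ (l.1 - l.2 + h)
      / (th1 τ (l.1 + l.2) * th1 τ (l.1 - l.2)) * f (l.1 - h, l.2)
  + th1 τ (l.1 + l.2 - h) * th1 τ (l.1 - l.2 + h)
      / (th1 τ (l.1 + l.2) * th1 τ (l.1 - l.2)) * f (l.1, l.2 + h)
  + th1 τ (l.1 + l.2 + h) * th1 τ (l.1 - l.2 - h)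
      / (th1 τ (l.1 + l.2) * th1 τ (l.1 - l.2)) * f (l.1, l.2 - h)

/-- The difference operator `M̃₂` of type `C₂`. -/
noncomputable def M2t (τ h : ℂ) (f : ℂ × ℂ → ℂ) (l : ℂ × ℂ) : ℂ :=
  (∑ ε ∈ ({1, -1} : Finset ℤ), ∑ ε' ∈ ({1, -1} : Finset ℤ),
    th1 τ ((ε : ℂ) * l.1 + (ε' : ℂ) * l.2 - h)
      / th1 τ ((ε : ℂ) * l.1 + (ε' : ℂ) * l.2 + h)
      * f (l.1 + (ε : ℂ) * h, l.2 + (ε' : ℂ) * h))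
  + (∑ ε ∈ ({1, -1} : Finset ℤ), ∑ ε' ∈ ({1, -1} : Finset ℤ),
      th1 τ ((ε : ℂ) * l.1 + (ε' : ℂ) * l.2 - h)
        * th1 τ ((ε : ℂ) * l.1 + (ε' : ℂ) * l.2 + 2 * h)
        / (th1 τ ((ε : ℂ) * l.1 + (ε' : ℂ) * l.2)
            * th1 τ ((ε : ℂ) * l.1 + (ε' : ℂ) * l.2 + h))) * f l

open Real

lemma summable_norm_jacobiTheta₂_term (z : ℂ) {τ : ℂ} (hτ : 0 < τ.im) :
    Summable (fun n : ℤ => ‖jacobiTheta₂_term n z τ‖) :=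
  summable_norm_iff.mpr ((summable_jacobiTheta₂_term_iff z τ).mpr hτ)

lemma jacobiTheta₂_mul_jacobiTheta₂_eq_tsum (u v : ℂ) {τ : ℂ} (hτ : 0 < τ.im) :
    jacobiTheta₂ u τ * jacobiTheta₂ v τ
      = ∑' p : ℤ × ℤ, jacobiTheta₂_term p.1 u τ * jacobiTheta₂_term p.2 v τ :=
  tsum_mul_tsum_of_summable_norm (f := (jacobiTheta₂_term · u τ)) (g := (jacobiTheta₂_term · v τ))
    (summable_norm_jacobiTheta₂_term u hτ)
    (summable_norm_jacobiTheta₂_term v hτ)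

def evenSumEquiv : ℤ × ℤ ≃ {p : ℤ × ℤ | Even (p.1 + p.2)} where
  toFun ab := ⟨(ab.1 + ab.2, ab.1 - ab.2), ⟨ab.1, by ring⟩⟩
  invFun p := ((p.1.1 + p.1.2) / 2, (p.1.1 - p.1.2) / 2)
  left_inv ab := by simp only [Prod.ext_iff]; omega
  right_inv := by
    rintro ⟨⟨m, n⟩, ⟨c, hc⟩⟩
    simp only at hc
    simp only [Subtype.ext_iff, Prod.ext_iff]
    omega

def oddSumEquiv : ℤ × ℤ ≃ ({p : ℤ × ℤ | Even (p.1 + p.2)}ᶜ : Set (ℤ × ℤ)) where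
  toFun ab := ⟨(ab.1 + ab.2 + 1, ab.1 - ab.2), Int.not_even_iff_odd.mpr ⟨ab.1, by ring⟩⟩
  invFun p := ((p.1.1 + p.1.2 - 1) / 2, (p.1.1 - p.1.2 - 1) / 2)
  left_inv ab := by simp only [Prod.ext_iff]; omega
  right_inv := by
    rintro ⟨⟨m, n⟩, hmn⟩
    obtain ⟨c, hc⟩ := Int.not_even_iff_odd.mp hmn
    simp only at hc
    simp only [Subtype.ext_iff, Prod.ext_iff]
    omega

/-- The double series for the product is split by the parity of `m + n`, writing
`(m, n) = (a + b, a - b)` resp. `(a + b + 1, a - b)`. -/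
lemma jacobiTheta₂_mul_jacobiTheta₂ (u v : ℂ) {τ : ℂ} (hτ : 0 < τ.im) :
    jacobiTheta₂ u τ * jacobiTheta₂ v τ
      = jacobiTheta₂ (u + v) (2 * τ) * jacobiTheta₂ (u - v) (2 * τ)
        + cexp (π * I * τ + 2 * π * I * u) *
          (jacobiTheta₂ (u + v + τ) (2 * τ) * jacobiTheta₂ (u - v + τ) (2 * τ)) := by
  have h2τ : 0 < (2 * τ).im := by simpa using hτ
  have hsum : Summable fun p : ℤ × ℤ => jacobiTheta₂_term p.1 u τ * jacobiTheta₂_term p.2 v τ :=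
    summable_mul_of_summable_norm (f := (jacobiTheta₂_term · u τ)) (g := (jacobiTheta₂_term · v τ))
      (summable_norm_jacobiTheta₂_term u hτ)
      (summable_norm_jacobiTheta₂_term v hτ)
  rw [jacobiTheta₂_mul_jacobiTheta₂_eq_tsum u v hτ,
    ← hsum.tsum_subtype_add_tsum_subtype_compl {p : ℤ × ℤ | Even (p.1 + p.2)},
    jacobiTheta₂_mul_jacobiTheta₂_eq_tsum _ _ h2τ, jacobiTheta₂_mul_jacobiTheta₂_eq_tsum _ _ h2τ,
    ← tsum_mul_left]
  congr 1
  · rw [← evenSumEquiv.tsum_eq]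
    refine tsum_congr fun ab => ?_
    simp only [evenSumEquiv, Equiv.coe_fn_mk, jacobiTheta₂_term, ← Complex.exp_add]
    congr 1
    push_cast
    ring
  · rw [← oddSumEquiv.tsum_eq]
    refine tsum_congr fun ab => ?_
    simp only [oddSumEquiv, Equiv.coe_fn_mk, jacobiTheta₂_term, ← Complex.exp_add]
    congr 1
    push_cast
    ring

lemma th3_eq_jacobiTheta₂ (τ z : ℂ) : th3 τ z = jacobiTheta₂ z τ :=
  tsum_congr fun k => by rw [jacobiTheta₂_term]; ring_nf

lemma th4_eq_jacobiTheta₂ (τ z : ℂ) : th4 τ z = jacobiTheta₂ (z + 1 / 2) τ :=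
  tsum_congr fun k => by rw [jacobiTheta₂_term]; ring_nf

lemma th2_eq_jacobiTheta₂ (τ z : ℂ) :
    th2 τ z = cexp (π * I * τ / 4 + π * I * z) * jacobiTheta₂ (z + τ / 2) τ := by
  rw [jacobiTheta₂, ← tsum_mul_left]
  refine tsum_congr fun k => ?_
  rw [jacobiTheta₂_term, ← Complex.exp_add]
  ring_nf

lemma th1_eq_jacobiTheta₂ (τ z : ℂ) :
    th1 τ z = cexp (π * I * τ / 4 + π * I * (z + 1 / 2)) * jacobiTheta₂ (z + 1 / 2 + τ / 2) τ := by
  rw [jacobiTheta₂, ← tsum_mul_left]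
  refine tsum_congr fun k => ?_
  rw [jacobiTheta₂_term, ← Complex.exp_add]
  ring_nf

lemma th2_two_mul (τ z : ℂ) :
    th2 (2 * τ) z = cexp (π * I * τ / 2 + π * I * z) * jacobiTheta₂ (z + τ) (2 * τ) := by
  rw [th2_eq_jacobiTheta₂]
  ring_nf

lemma th1_neg (τ z : ℂ) : th1 τ (-z) = -th1 τ z := by
  rw [th1_eq_jacobiTheta₂, th1_eq_jacobiTheta₂,
    show -z + 1 / 2 + τ / 2 = -(z - 1 / 2 - τ / 2) by ring, jacobiTheta₂_neg_left,
    show z + 1 / 2 + τ / 2 = z - 1 / 2 - τ / 2 + τ + 1 by ring, jacobiTheta₂_add_left,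
    jacobiTheta₂_add_left', ← mul_assoc, ← Complex.exp_add,
    show π * I * τ / 4 + π * I * (z + 1 / 2) + -π * I * (τ + 2 * (z - 1 / 2 - τ / 2))
      = π * I * τ / 4 + π * I * (-z + 1 / 2) + π * I by ring,
    Complex.exp_add _ (π * I), Complex.exp_pi_mul_I]
  ring

lemma th3_mul_th3 {τ : ℂ} (hτ : 0 < τ.im) (u v : ℂ) :
    th3 τ u * th3 τ v
    = th3 (2 * τ) (u + v) * th3 (2 * τ) (u - v) + th2 (2 * τ) (u + v) * th2 (2 * τ) (u - v) := by
  have e : cexp (π * I * τ / 2 + π * I * (u + v)) * cexp (π * I * τ / 2 + π * I * (u - v))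
      = cexp (π * I * τ + 2 * π * I * u) := by
    rw [← Complex.exp_add]; ring_nf
  simp only [th3_eq_jacobiTheta₂, th2_two_mul, jacobiTheta₂_mul_jacobiTheta₂ u v hτ]
  linear_combination -(jacobiTheta₂ (u + v + τ) (2 * τ) * jacobiTheta₂ (u - v + τ) (2 * τ)) * e

lemma th4_mul_th4 {τ : ℂ} (hτ : 0 < τ.im) (u v : ℂ) :
    th4 τ u * th4 τ v
    = th3 (2 * τ) (u + v) * th3 (2 * τ) (u - v) - th2 (2 * τ) (u + v) * th2 (2 * τ) (u - v) := by
  have e : cexp (π * I * τ / 2 + π * I * (u + v)) * cexp (π * I * τ / 2 + π * I * (u - v))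
      = -cexp (π * I * τ + 2 * π * I * (u + 1 / 2)) := by
    rw [← Complex.exp_add, show π * I * τ + 2 * π * I * (u + 1 / 2)
      = π * I * τ / 2 + π * I * (u + v) + (π * I * τ / 2 + π * I * (u - v)) + π * I by ring,
      Complex.exp_add _ (π * I), Complex.exp_pi_mul_I]
    ring
  simp only [th4_eq_jacobiTheta₂, th3_eq_jacobiTheta₂, th2_two_mul,
    jacobiTheta₂_mul_jacobiTheta₂ _ _ hτ]
  rw [show u + 1 / 2 + (v + 1 / 2) + τ = u + v + τ + 1 by ring,
    show u + 1 / 2 + (v + 1 / 2) = u + v + 1 by ring,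
    show u + 1 / 2 - (v + 1 / 2) = u - v by ring,
    jacobiTheta₂_add_left, jacobiTheta₂_add_left]
  linear_combination (jacobiTheta₂ (u + v + τ) (2 * τ) * jacobiTheta₂ (u - v + τ) (2 * τ)) * e

lemma th2_mul_th2 {τ : ℂ} (hτ : 0 < τ.im) (u v : ℂ) :
    th2 τ u * th2 τ v
    = th2 (2 * τ) (u + v) * th3 (2 * τ) (u - v) + th3 (2 * τ) (u + v) * th2 (2 * τ) (u - v) := by
  have e₁ : cexp (π * I * τ / 4 + π * I * u) * cexp (π * I * τ / 4 + π * I * v)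
      = cexp (π * I * τ / 2 + π * I * (u + v)) := by
    rw [← Complex.exp_add]; ring_nf
  have e₂ : cexp (π * I * τ / 4 + π * I * u) * cexp (π * I * τ / 4 + π * I * v)
      * cexp (π * I * τ + 2 * π * I * (u + τ / 2)) * cexp (-π * I * (2 * τ + 2 * (u + v)))
      = cexp (π * I * τ / 2 + π * I * (u - v)) := by
    simp only [← Complex.exp_add]; ring_nf
  rw [th2_eq_jacobiTheta₂, th2_eq_jacobiTheta₂, mul_mul_mul_comm,
    jacobiTheta₂_mul_jacobiTheta₂ _ _ hτ,
    show u + τ / 2 + (v + τ / 2) + τ = u + v + 2 * τ by ring,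
    show u + τ / 2 + (v + τ / 2) = u + v + τ by ring,
    show u + τ / 2 - (v + τ / 2) + τ = u - v + τ by ring,
    show u + τ / 2 - (v + τ / 2) = u - v by ring,
    jacobiTheta₂_add_left', th2_two_mul, th2_two_mul, th3_eq_jacobiTheta₂, th3_eq_jacobiTheta₂]
  linear_combination (jacobiTheta₂ (u + v + τ) (2 * τ) * jacobiTheta₂ (u - v) (2 * τ)) * e₁
    + (jacobiTheta₂ (u + v) (2 * τ) * jacobiTheta₂ (u - v + τ) (2 * τ)) * e₂

lemma th1_mul_th1 {τ : ℂ} (hτ : 0 < τ.im) (u v : ℂ) :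
    th1 τ u * th1 τ v
    = th3 (2 * τ) (u + v) * th2 (2 * τ) (u - v) - th2 (2 * τ) (u + v) * th3 (2 * τ) (u - v) := by
  have e₁ : cexp (π * I * τ / 4 + π * I * (u + 1 / 2)) * cexp (π * I * τ / 4 + π * I * (v + 1 / 2))
      = -cexp (π * I * τ / 2 + π * I * (u + v)) := by
    rw [← Complex.exp_add,
      show π * I * τ / 4 + π * I * (u + 1 / 2) + (π * I * τ / 4 + π * I * (v + 1 / 2))
        = π * I * τ / 2 + π * I * (u + v) + π * I by ring,
      Complex.exp_add _ (π * I), Complex.exp_pi_mul_I]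
    ring
  have e₂ : cexp (π * I * τ / 4 + π * I * (u + 1 / 2)) * cexp (π * I * τ / 4 + π * I * (v + 1 / 2))
      * cexp (π * I * τ + 2 * π * I * (u + 1 / 2 + τ / 2)) * cexp (-π * I * (2 * τ + 2 * (u + v)))
      = cexp (π * I * τ / 2 + π * I * (u - v)) := by
    simp only [← Complex.exp_add]
    rw [show π * I * τ / 4 + π * I * (u + 1 / 2) + (π * I * τ / 4 + π * I * (v + 1 / 2))
        + (π * I * τ + 2 * π * I * (u + 1 / 2 + τ / 2)) + -π * I * (2 * τ + 2 * (u + v))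
        = π * I * τ / 2 + π * I * (u - v) + 2 * π * I by ring,
      Complex.exp_add _ (2 * π * I), Complex.exp_two_pi_mul_I, mul_one]
  rw [th1_eq_jacobiTheta₂, th1_eq_jacobiTheta₂, mul_mul_mul_comm,
    jacobiTheta₂_mul_jacobiTheta₂ _ _ hτ,
    show u + 1 / 2 + τ / 2 + (v + 1 / 2 + τ / 2) + τ = u + v + 2 * τ + 1 by ring,
    show u + 1 / 2 + τ / 2 + (v + 1 / 2 + τ / 2) = u + v + τ + 1 by ring,
    show u + 1 / 2 + τ / 2 - (v + 1 / 2 + τ / 2) + τ = u - v + τ by ring,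
    show u + 1 / 2 + τ / 2 - (v + 1 / 2 + τ / 2) = u - v by ring,
    jacobiTheta₂_add_left, jacobiTheta₂_add_left, jacobiTheta₂_add_left',
    th2_two_mul, th2_two_mul, th3_eq_jacobiTheta₂, th3_eq_jacobiTheta₂]
  linear_combination (jacobiTheta₂ (u + v + τ) (2 * τ) * jacobiTheta₂ (u - v) (2 * τ)) * e₁
    + (jacobiTheta₂ (u + v) (2 * τ) * jacobiTheta₂ (u - v + τ) (2 * τ)) * e₂

/-- The operator `H` of the paper, with `θ = θ₁`. -/
noncomputable def shiftOp (θ : ℂ → ℂ) (h : ℂ) (f : ℂ → ℂ) (x : ℂ) : ℂ :=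
  (θ (x - h) * f (x + h) + θ (x + h) * f (x - h)) / θ x

section ShiftOp

variable {θ : ℂ → ℂ} {h : ℂ}

lemma shiftOp_apply_of_mul_eq {f A B : ℂ → ℂ} (p q r : ℂ)
    (hθ : ∀ u v, θ u * θ v = A (u + v) * B (u - v) - B (u + v) * A (u - v))
    (hf : ∀ u v, f u * f v = p * A (u + v) * A (u - v)
      + q * (A (u + v) * B (u - v) + B (u + v) * A (u - v)) + r * B (u + v) * B (u - v))
    (hh : θ h * f h ≠ 0) {x : ℂ} (hx : θ x ≠ 0) :
    shiftOp θ h f x = θ (2 * h) * f 0 / (θ h * f h) * f x := by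
  have h₁ : θ (x - h) * θ h = A x * B (x - 2 * h) - B x * A (x - 2 * h) := by rw [hθ]; ring_nf
  have h₂ : θ (x + h) * θ h = A (x + 2 * h) * B x - B (x + 2 * h) * A x := by rw [hθ]; ring_nf
  have h₃ : θ x * θ (2 * h)
      = A (x + 2 * h) * B (x - 2 * h) - B (x + 2 * h) * A (x - 2 * h) := hθ _ _
  have k₁ : f (x + h) * f h = p * A (x + 2 * h) * A x
      + q * (A (x + 2 * h) * B x + B (x + 2 * h) * A x) + r * B (x + 2 * h) * B x := by
    rw [hf]; ring_nf
  have k₂ : f (x - h) * f h = p * A x * A (x - 2 * h)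
      + q * (A x * B (x - 2 * h) + B x * A (x - 2 * h)) + r * B x * B (x - 2 * h) := by
    rw [hf]; ring_nf
  have k₃ : f x * f 0 = p * A x * A x + q * (A x * B x + B x * A x) + r * B x * B x := by
    rw [hf]; ring_nf
  rw [shiftOp, div_mul_eq_mul_div, div_eq_div_iff hx hh]
  -- what remains is a Plücker-type relation among `A, B` at `x - 2h, x, x + 2h`
  linear_combination f (x + h) * f h * h₁ + (A x * B (x - 2 * h) - B x * A (x - 2 * h)) * k₁
    + f (x - h) * f h * h₂ + (A (x + 2 * h) * B x - B (x + 2 * h) * A x) * k₂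
    - f x * f 0 * h₃ - (A (x + 2 * h) * B (x - 2 * h) - B (x + 2 * h) * A (x - 2 * h)) * k₃

lemma shiftOp_shiftOp_apply {f : ℂ → ℂ} {x : ℂ} (hx : θ x ≠ 0) :
    shiftOp θ h (shiftOp θ h f) x
      = θ (x - h) / θ (x + h) * f (x + 2 * h) + θ (x + h) / θ (x - h) * f (x - 2 * h)
        + (θ (x - h) * θ (x + 2 * h) / (θ x * θ (x + h))
          + θ (x + h) * θ (x - 2 * h) / (θ x * θ (x - h))) * f x := by
  simp only [shiftOp, add_sub_cancel_right, sub_add_cancel, add_assoc, ← two_mul, sub_sub]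
  field_simp
  ring

lemma shiftOp_shiftOp_apply_of_eigen {f : ℂ → ℂ} {c : ℂ}
    (hf : ∀ y, θ y ≠ 0 → shiftOp θ h f y = c * f y) {x : ℂ} (hx : θ x ≠ 0)
    (hxh : θ (x + h) ≠ 0) (hxh' : θ (x - h) ≠ 0) :
    shiftOp θ h (shiftOp θ h f) x = c ^ 2 * f x := by
  rw [shiftOp, hf _ hxh, hf _ hxh', pow_two, mul_assoc, ← hf x hx, shiftOp]
  ring

end ShiftOp

lemma M1t_prod (τ h : ℂ) (F G : ℂ → ℂ) (l : ℂ × ℂ) :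
    M1t τ h (fun x => F (x.1 + x.2) * G (x.1 - x.2)) l
      = shiftOp (th1 τ) h F (l.1 + l.2) * shiftOp (th1 τ) h G (l.1 - l.2) := by
  simp only [M1t, shiftOp]
  ring_nf

lemma M2t_prod (τ h : ℂ) (F G : ℂ → ℂ) {l : ℂ × ℂ} (hp : th1 τ (l.1 + l.2) ≠ 0)
    (hm : th1 τ (l.1 - l.2) ≠ 0) :
    M2t τ h (fun x => F (x.1 + x.2) * G (x.1 - x.2)) l
      = shiftOp (th1 τ) h (shiftOp (th1 τ) h F) (l.1 + l.2) * G (l.1 - l.2)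
        + F (l.1 + l.2) * shiftOp (th1 τ) h (shiftOp (th1 τ) h G) (l.1 - l.2) := by
  have th1_neg_sub : ∀ y c, th1 τ (-y - c) = -th1 τ (y + c) := fun y c => by rw [← th1_neg]; ring_nf
  have th1_neg_add : ∀ y c, th1 τ (-y + c) = -th1 τ (y - c) := fun y c => by rw [← th1_neg]; ring_nf
  simp only [M2t, Finset.sum_insert (show (1 : ℤ) ∉ ({-1} : Finset ℤ) by decide),
    Finset.sum_singleton, Int.cast_one, Int.cast_neg, one_mul, neg_one_mul]
  rw [show -l.1 + l.2 = -(l.1 - l.2) by ring, show -l.1 + -l.2 = -(l.1 + l.2) by ring,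
    ← sub_eq_add_neg]
  simp only [th1_neg_sub, th1_neg_add, th1_neg]
  rw [shiftOp_shiftOp_apply hp, shiftOp_shiftOp_apply hm]
  ring_nf

lemma shiftOp_th1_apply {τ : ℂ} (hτ : 0 < τ.im) {h : ℂ} {f : ℂ → ℂ}
    (hf : f = th2 τ ∨ f = th3 τ ∨ f = th4 τ) (hh : th1 τ h * f h ≠ 0) (x : ℂ)
    (hx : th1 τ x ≠ 0) :
    shiftOp (th1 τ) h f x = th1 τ (2 * h) * f 0 / (th1 τ h * f h) * f x := by
  have h₁ := th1_mul_th1 hτ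
  rcases hf with rfl | rfl | rfl
  · exact shiftOp_apply_of_mul_eq 0 1 0 h₁ (fun u v => by rw [th2_mul_th2 hτ]; ring) hh hx
  · exact shiftOp_apply_of_mul_eq 1 0 1 h₁ (fun u v => by rw [th3_mul_th3 hτ]; ring) hh hx
  · exact shiftOp_apply_of_mul_eq 1 0 (-1) h₁ (fun u v => by rw [th4_mul_th4 hτ]; ring) hh hx

/-- The products `θᵢ(λ₊)θⱼ(λ₋)` of Bethe-ansatz solutions are common
eigenfunctions of `M̃₁ = H₊H₋` and `M̃₂ = H₊² + H₋²`. -/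
theorem stmt_6 (τ : ℂ) (hτ : 0 < τ.im) (h : ℂ) (F G : ℂ → ℂ)
    (hF : F = th2 τ ∨ F = th3 τ ∨ F = th4 τ)
    (hG : G = th2 τ ∨ G = th3 τ ∨ G = th4 τ)
    (hh : th1 τ h * F h * G h ≠ 0) (l : ℂ × ℂ)
    (hden : ∀ ε ∈ ({1, -1} : Finset ℤ), ∀ ε' ∈ ({1, -1} : Finset ℤ),
      th1 τ ((ε : ℂ) * l.1 + (ε' : ℂ) * l.2) ≠ 0 ∧
      th1 τ ((ε : ℂ) * l.1 + (ε' : ℂ) * l.2 + h) ≠ 0) :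
    M1t τ h (fun x => F (x.1 + x.2) * G (x.1 - x.2)) l
      = (th1 τ (2 * h))^2 * F 0 * G 0 / ((th1 τ h)^2 * F h * G h)
          * (F (l.1 + l.2) * G (l.1 - l.2)) ∧
    M2t τ h (fun x => F (x.1 + x.2) * G (x.1 - x.2)) l
      = (th1 τ (2 * h))^2 / (th1 τ h)^2
          * ((F 0)^2 / (F h)^2 + (G 0)^2 / (G h)^2)
          * (F (l.1 + l.2) * G (l.1 - l.2)) := by
  have hhF : th1 τ h * F h ≠ 0 := left_ne_zero_of_mul hh
  have hhG : th1 τ h * G h ≠ 0 :=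
    mul_ne_zero (left_ne_zero_of_mul hhF) (right_ne_zero_of_mul hh)
  obtain ⟨hp, hph⟩ : th1 τ (l.1 + l.2) ≠ 0 ∧ th1 τ (l.1 + l.2 + h) ≠ 0 := by
    simpa using hden 1 (by simp) 1 (by simp)
  obtain ⟨hm, hmh⟩ : th1 τ (l.1 - l.2) ≠ 0 ∧ th1 τ (l.1 - l.2 + h) ≠ 0 := by
    simpa [← sub_eq_add_neg] using hden 1 (by simp) (-1) (by simp)
  have hph' : th1 τ (l.1 + l.2 - h) ≠ 0 := by
    have := (hden (-1) (by simp) (-1) (by simp)).2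
    rwa [show ((-1 : ℤ) : ℂ) * l.1 + ((-1 : ℤ) : ℂ) * l.2 + h = -(l.1 + l.2 - h) by push_cast; ring,
      th1_neg, neg_ne_zero] at this
  have hmh' : th1 τ (l.1 - l.2 - h) ≠ 0 := by
    have := (hden (-1) (by simp) 1 (by simp)).2
    rwa [show ((-1 : ℤ) : ℂ) * l.1 + ((1 : ℤ) : ℂ) * l.2 + h = -(l.1 - l.2 - h) by push_cast; ring,
      th1_neg, neg_ne_zero] at this
  have eF := shiftOp_th1_apply hτ hF hhF
  have eG := shiftOp_th1_apply hτ hG hhG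
  refine ⟨?_, ?_⟩
  · rw [M1t_prod, eF _ hp, eG _ hm]
    ring
  · rw [M2t_prod τ h F G hp hm, shiftOp_shiftOp_apply_of_eigen eF hp hph hph',
      shiftOp_shiftOp_apply_of_eigen eG hm hmh hmh']
    ring
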